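/- Let E be a Polish space with Borel σ-algebra 𝓔 and U a compact metric space. Let P^a(x,·) be a controlled transition kernel satisfying (UE): sup over x, x' ∈ E, a, a' ∈ U, B ∈ 𝓔 of (P^a(x,B) − P^{a'}(x',B)) =: Δ < 1, and (ME): there exist an integer m ≥ 1 and K < ∞ such that (Q^u)^m(x,B) ≤ K (Q^u)^m(x',B) for every Borel measurable control u and all x, x' ∈ E, B ∈ 𝓔. Let c : E × U → ℝ be bounded, Borel measurable and continuous in its second variable. Let u_n, u : E → U be Borel measurable controls with u_n(x) → u(x) for every x ∈ E, and assume that for every x ∈ E, sup_{B ∈ 𝓔} |Q^{u_n}(x,B) − Q^{u}(x,B)| → 0 as n → ∞. Then for every α ≠ 0 and every x ∈ E, I_x^α(u_n) → I_x^α(u) as n → ∞. -/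

import Mathlib

open MeasureTheory ProbabilityTheory Filter
open scoped ENNReal

/-- Total variation distance `sup_{B ∈ 𝓔} |μ(B) − ν(B)|`. -/
noncomputable def tvDist {E : Type*} [MeasurableSpace E] (μ ν : Measure E) : ℝ :=
  ⨆ B : {B : Set E // MeasurableSet B}, |(μ B.1).toReal - (ν B.1).toReal|

/-- `k`-th iterate of a kernel. -/
noncomputable def kIter {E : Type*} [MeasurableSpace E] (Q : Kernel E E) : ℕ → Kernel E E
  | 0 => Kernel.id
  | k + 1 => (kIter Q k) ∘ₖ Q

/-- The kernel `Q^u(x,·) = P^{u(x)}(x,·)` of a Borel measurable control `u`. -/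
noncomputable def Qctrl {E U : Type*} [MeasurableSpace E] [MeasurableSpace U]
    (P : Kernel (E × U) E) (u : E → U) (hu : Measurable u) : Kernel E E :=
  P.comap (fun x => (x, u x)) (measurable_id.prodMk hu)

/-- Weighted (Feynman–Kac) operator `(S_{f,α} h)(x) = e^{α f(x)} ∫ h(y) Q(x,dy)`. -/
noncomputable def Sop {E : Type*} [MeasurableSpace E] (Q : Kernel E E)
    (f : E → ℝ) (α : ℝ) (h : E → ℝ) : E → ℝ :=
  fun x => Real.exp (α * f x) * ∫ y, h y ∂ (Q x)

/-- Long run risk-sensitive functional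
`I_x^α = liminf_n (1/n) ln E_x[e^{α Σ_{i<n} f(X_i)}]`. -/
noncomputable def IRS {E : Type*} [MeasurableSpace E] (Q : Kernel E E)
    (f : E → ℝ) (α : ℝ) (x : E) : ℝ :=
  Filter.liminf (fun n : ℕ =>
    (1 / (n : ℝ)) * Real.log ((Sop Q f α)^[n] (fun _ => 1) x)) atTop

/-!
Write `v n = (S_{c_u,α})^n 1` and `B = |α| sup |c|`. Since `e^{-B} ≤ e^{α c_u} ≤ e^B`, the
operator `S^m` is comparable, up to factors `e^{± m B}`, with integration against the `m`-step
kernel `Q^m(x, ·)`, so (ME) gives a Harnack inequality `v q y ≤ M * v q x` with `M = K e^{2 m B}`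
independent of the control. Monotonicity and homogeneity of `S` turn it into almost additivity of
`n ↦ log (v n x)` with defect `log M`, and Fekete's lemma then shows that `log (v n x) / n` tends
to `I_x^α` at rate `log M / n`, uniformly in the control. Each finite-horizon value `v n x` is
continuous along `u_n → u` (pointwise convergence of the costs, total variation convergence of the
kernels), so the Moore–Osgood theorem exchanges the limits in `n` and along the controls.
-/

open Set Topology

section TotalVariation

variable {E : Type*} [MeasurableSpace E] {μ ν : Measure E} [IsFiniteMeasure μ] [IsFiniteMeasure ν]

lemma abs_measureReal_sub_le_tvDist {s : Set E} (hs : MeasurableSet s) :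
    |μ.real s - ν.real s| ≤ tvDist μ ν := by
  refine le_ciSup (f := fun s : {s : Set E // MeasurableSet s} => |μ.real s.1 - ν.real s.1|)
    ⟨μ.real univ + ν.real univ, ?_⟩ ⟨s, hs⟩
  rintro _ ⟨t, rfl⟩
  refine (abs_sub _ _).trans (add_le_add ?_ ?_) <;>
    rw [abs_of_nonneg measureReal_nonneg] <;> exact measureReal_mono (subset_univ _)

lemma abs_integral_sub_le_mul_tvDist {g : E → ℝ} {R : ℝ} (hg : Measurable g) (hR : 0 ≤ R)
    (hgR : ∀ x, g x ∈ Icc 0 R) :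
    |∫ x, g x ∂μ - ∫ x, g x ∂ν| ≤ R * tvDist μ ν := by
  have layer_cake (ρ : Measure E) [IsFiniteMeasure ρ] :
      ∫ x, g x ∂ρ = ∫ t in (0 : ℝ)..R, ρ.real {x | t ≤ g x} := by
    rw [intervalIntegral.integral_of_le hR]
    exact Integrable.integral_eq_integral_Ioc_meas_le
      (Integrable.of_mem_Icc 0 R hg.aemeasurable (ae_of_all _ hgR))
      (ae_of_all _ fun x => (hgR x).1) (ae_of_all _ fun x => (hgR x).2)
  have tail_integrable (ρ : Measure E) [IsFiniteMeasure ρ] :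
      IntervalIntegrable (fun t => ρ.real {x | t ≤ g x}) volume 0 R :=
    Antitone.intervalIntegrable fun s t hst => measureReal_mono fun x hx => hst.trans hx
  rw [layer_cake μ, layer_cake ν, ← intervalIntegral.integral_sub (tail_integrable μ)
    (tail_integrable ν)]
  calc |∫ t in (0 : ℝ)..R, μ.real {x | t ≤ g x} - ν.real {x | t ≤ g x}|
        ≤ tvDist μ ν * |R - 0| := by
          rw [← Real.norm_eq_abs]
          exact intervalIntegral.norm_integral_le_of_norm_le_const
            fun t _ => abs_measureReal_sub_le_tvDist (measurableSet_le measurable_const hg)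
    _ = R * tvDist μ ν := by rw [sub_zero, abs_of_nonneg hR, mul_comm]

end TotalVariation

lemma integral_le_mul_integral_of_le_smul {E : Type*} [MeasurableSpace E] {μ ν : Measure E}
    {K : ℝ} (hK : 0 ≤ K) (hμν : ∀ s, MeasurableSet s → μ s ≤ ENNReal.ofReal K * ν s)
    {g : E → ℝ} (hg0 : 0 ≤ g) (hg : Integrable g ν) : ∫ x, g x ∂μ ≤ K * ∫ x, g x ∂ν := by
  have hle : μ ≤ ENNReal.ofReal K • ν := Measure.le_iff.2 fun s hs => by simpa using hμν s hs
  calc ∫ x, g x ∂μ ≤ ∫ x, g x ∂(ENNReal.ofReal K • ν) :=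
        integral_mono_measure hle (ae_of_all _ hg0) (hg.smul_measure ENNReal.ofReal_ne_top)
    _ = K * ∫ x, g x ∂ν := by rw [integral_smul_measure, ENNReal.toReal_ofReal hK, smul_eq_mul]

theorem tendsto_integral_of_tendsto_tvDist {E : Type*} [MeasurableSpace E] {μ : ℕ → Measure E}
    {ν : Measure E} [∀ k, IsFiniteMeasure (μ k)] [IsFiniteMeasure ν] {g : ℕ → E → ℝ}
    {g₀ : E → ℝ} {R : ℝ} (hg : ∀ k, Measurable (g k)) (hR : 0 ≤ R) (hgR : ∀ k x, g k x ∈ Icc 0 R)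
    (hg₀ : ∀ x, Tendsto (fun k => g k x) atTop (𝓝 (g₀ x)))
    (htv : Tendsto (fun k => tvDist (μ k) ν) atTop (𝓝 0)) :
    Tendsto (fun k => ∫ x, g k x ∂μ k) atTop (𝓝 (∫ x, g₀ x ∂ν)) := by
  have fixed_measure : Tendsto (fun k => ∫ x, g k x ∂ν) atTop (𝓝 (∫ x, g₀ x ∂ν)) :=
    tendsto_integral_of_dominated_convergence (fun _ => R) (fun k => (hg k).aestronglyMeasurable)
      (integrable_const R) (fun k => ae_of_all _ fun x => by
        rw [Real.norm_of_nonneg (hgR k x).1]; exact (hgR k x).2) (ae_of_all _ hg₀)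
  have change_of_measure :
      Tendsto (fun k => ∫ x, g k x ∂μ k - ∫ x, g k x ∂ν) atTop (𝓝 0) :=
    squeeze_zero_norm (fun k => abs_integral_sub_le_mul_tvDist (hg k) hR (hgR k))
      (by simpa using htv.const_mul R)
  simpa using change_of_measure.add fixed_measure

namespace ProbabilityTheory.Kernel

variable {E : Type*} [MeasurableSpace E]

instance isMarkovKernel_kIter (Q : Kernel E E) [IsMarkovKernel Q] :
    ∀ p, IsMarkovKernel (kIter Q p)
  | 0 => inferInstanceAs (IsMarkovKernel Kernel.id)
  | p + 1 =>
    have := isMarkovKernel_kIter Q p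
    inferInstanceAs (IsMarkovKernel (kIter Q p ∘ₖ Q))

instance isMarkovKernel_Qctrl {U : Type*} [MeasurableSpace U] (P : Kernel (E × U) E)
    [IsMarkovKernel P] (u : E → U) (hu : Measurable u) : IsMarkovKernel (Qctrl P u hu) :=
  inferInstanceAs (IsMarkovKernel (P.comap _ _))

end ProbabilityTheory.Kernel

structure IsBddNonnegMeasurable {E : Type*} [MeasurableSpace E] (g : E → ℝ) : Prop where
  measurable : Measurable g
  nonneg : 0 ≤ g
  bddAbove : ∃ R, ∀ x, g x ≤ R

namespace IsBddNonnegMeasurable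

variable {E : Type*} [MeasurableSpace E] {g : E → ℝ}

lemma const {c : ℝ} (hc : 0 ≤ c) : IsBddNonnegMeasurable fun _ : E => c :=
  ⟨measurable_const, fun _ => hc, c, fun _ => le_rfl⟩

lemma smul (hg : IsBddNonnegMeasurable g) {c : ℝ} (hc : 0 ≤ c) : IsBddNonnegMeasurable (c • g) :=
  have ⟨R, hR⟩ := hg.bddAbove
  ⟨hg.measurable.const_smul c, smul_nonneg hc hg.nonneg, c * R,
    fun x => mul_le_mul_of_nonneg_left (hR x) hc⟩

lemma integrable (hg : IsBddNonnegMeasurable g) (μ : Measure E) [IsFiniteMeasure μ] :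
    Integrable g μ :=
  have ⟨R, hR⟩ := hg.bddAbove
  Integrable.of_mem_Icc 0 R hg.measurable.aemeasurable
    (ae_of_all _ fun x => ⟨hg.nonneg x, hR x⟩)

end IsBddNonnegMeasurable

section WeightedOperator

variable {E : Type*} [MeasurableSpace E] {Q : Kernel E E} {f : E → ℝ} {α β B D : ℝ}
  {g g₁ g₂ : E → ℝ}

lemma Sop_nonneg (hg : 0 ≤ g) : 0 ≤ Sop Q f α g :=
  fun _ => mul_nonneg (Real.exp_nonneg _) (integral_nonneg hg)

lemma Sop_iterate_nonneg (hg : 0 ≤ g) (p : ℕ) : 0 ≤ (Sop Q f α)^[p] g := by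
  induction p with
  | zero => exact hg
  | succ p ih => rw [Function.iterate_succ_apply']; exact Sop_nonneg ih

lemma Sop_smul (c : ℝ) (g : E → ℝ) : Sop Q f α (c • g) = c • Sop Q f α g := by
  ext x
  simp only [Sop, Pi.smul_apply, smul_eq_mul, integral_const_mul]
  ring

lemma Sop_iterate_smul (c : ℝ) (g : E → ℝ) (p : ℕ) :
    (Sop Q f α)^[p] (c • g) = c • (Sop Q f α)^[p] g := by
  induction p with
  | zero => rfl
  | succ p ih => rw [Function.iterate_succ_apply', Function.iterate_succ_apply', ih, Sop_smul]

lemma Sop_mono [IsFiniteKernel Q] (hg₁ : 0 ≤ g₁) (h : g₁ ≤ g₂)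
    (hg₂ : IsBddNonnegMeasurable g₂) : Sop Q f α g₁ ≤ Sop Q f α g₂ := fun _ =>
  mul_le_mul_of_nonneg_left
    (integral_mono_of_nonneg (ae_of_all _ hg₁) (hg₂.integrable _) (ae_of_all _ h))
    (Real.exp_nonneg _)

lemma Sop_le_exp_smul (hD : ∀ x, α * f x ≤ β * f x + D) (hg : 0 ≤ g) :
    Sop Q f α g ≤ Real.exp D • Sop Q f β g := fun x => by
  simp only [Sop, Pi.smul_apply, smul_eq_mul, ← mul_assoc, ← Real.exp_add]
  exact mul_le_mul_of_nonneg_right (Real.exp_le_exp.2 (by linarith [hD x]))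
    (integral_nonneg hg)

lemma Sop_zero_iterate_eq_integral_kIter [IsMarkovKernel Q] (hg : IsBddNonnegMeasurable g)
    (p : ℕ) (x : E) : (Sop Q f 0)^[p] g x = ∫ y, g y ∂kIter Q p x := by
  induction p generalizing x with
  | zero => rw [Function.iterate_zero_apply, kIter, Kernel.id_apply,
      integral_dirac' _ _ hg.measurable.stronglyMeasurable]
  | succ p ih =>
    rw [Function.iterate_succ_apply', kIter, Kernel.integral_comp (hg.integrable _)]
    simp [Sop, ih]

variable [IsMarkovKernel Q]

lemma IsBddNonnegMeasurable.sop (hg : IsBddNonnegMeasurable g) (hf : Measurable f)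
    (hB : ∀ x, α * f x ≤ B) : IsBddNonnegMeasurable (Sop Q f α g) := by
  obtain ⟨R, hR⟩ := hg.bddAbove
  refine ⟨?_, Sop_nonneg hg.nonneg, Real.exp B * R, fun x => ?_⟩
  · exact (Real.measurable_exp.comp (hf.const_mul α)).mul
      (hg.measurable.stronglyMeasurable.integral_kernel (κ := Q)).measurable
  · refine mul_le_mul (Real.exp_le_exp.2 (hB x)) ?_ (integral_nonneg hg.nonneg)
      (Real.exp_nonneg _)
    simpa using integral_mono (hg.integrable (Q x)) (integrable_const R) hR

lemma IsBddNonnegMeasurable.sop_iterate (hg : IsBddNonnegMeasurable g) (hf : Measurable f)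
    (hB : ∀ x, α * f x ≤ B) (p : ℕ) : IsBddNonnegMeasurable ((Sop Q f α)^[p] g) := by
  induction p with
  | zero => exact hg
  | succ p ih => rw [Function.iterate_succ_apply']; exact ih.sop hf hB

lemma Sop_iterate_mono (hf : Measurable f) (hB : ∀ x, α * f x ≤ B) (hg₁ : 0 ≤ g₁) (h : g₁ ≤ g₂)
    (hg₂ : IsBddNonnegMeasurable g₂) (p : ℕ) : (Sop Q f α)^[p] g₁ ≤ (Sop Q f α)^[p] g₂ := by
  induction p with
  | zero => exact h
  | succ p ih =>
    rw [Function.iterate_succ_apply', Function.iterate_succ_apply']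
    exact Sop_mono (Sop_iterate_nonneg hg₁ p) ih (hg₂.sop_iterate hf hB p)

lemma Sop_iterate_le_exp_smul (hf : Measurable f) (hβ : ∀ x, β * f x ≤ B)
    (hD : ∀ x, α * f x ≤ β * f x + D) (hg : IsBddNonnegMeasurable g) (p : ℕ) :
    (Sop Q f α)^[p] g ≤ Real.exp (p * D) • (Sop Q f β)^[p] g := by
  induction p with
  | zero => simp
  | succ p ih =>
    rw [Function.iterate_succ_apply', Function.iterate_succ_apply']
    calc Sop Q f α ((Sop Q f α)^[p] g)
        ≤ Real.exp D • Sop Q f β ((Sop Q f α)^[p] g) :=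
          Sop_le_exp_smul hD (Sop_iterate_nonneg hg.nonneg p)
      _ ≤ Real.exp D • Sop Q f β (Real.exp (p * D) • (Sop Q f β)^[p] g) :=
          smul_le_smul_of_nonneg_left (Sop_mono (Sop_iterate_nonneg hg.nonneg p) ih
            ((hg.sop_iterate hf hβ p).smul (Real.exp_nonneg _))) (Real.exp_nonneg _)
      _ = Real.exp ((p + 1 : ℕ) * D) • Sop Q f β ((Sop Q f β)^[p] g) := by
          rw [Sop_smul, smul_smul, ← Real.exp_add]
          push_cast
          ring_nf

lemma Sop_iterate_le_exp_smul_Sop_zero_iterate (hf : Measurable f) (hB : ∀ x, |α * f x| ≤ B)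
    (hg : IsBddNonnegMeasurable g) (p : ℕ) :
    (Sop Q f α)^[p] g ≤ Real.exp (p * B) • (Sop Q f 0)^[p] g :=
  Sop_iterate_le_exp_smul hf (B := 0) (fun _ => by simp)
    (fun x => by simpa using le_of_abs_le (hB x)) hg p

lemma Sop_zero_iterate_le_exp_smul_Sop_iterate (hf : Measurable f) (hB : ∀ x, |α * f x| ≤ B)
    (hg : IsBddNonnegMeasurable g) (p : ℕ) :
    (Sop Q f 0)^[p] g ≤ Real.exp (p * B) • (Sop Q f α)^[p] g :=
  Sop_iterate_le_exp_smul hf (fun x => le_of_abs_le (hB x))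
    (fun x => by linarith [neg_le_of_abs_le (hB x)]) hg p

lemma Sop_iterate_one_mem_Icc (hf : Measurable f) (hB : ∀ x, |α * f x| ≤ B) (p : ℕ) (x : E) :
    (Sop Q f α)^[p] (fun _ => 1) x ∈ Icc (Real.exp (-(p * B))) (Real.exp (p * B)) := by
  have markov : (Sop Q f 0)^[p] (fun _ => 1) = fun _ => 1 :=
    Function.iterate_fixed (by ext; simp [Sop]) p
  have one : IsBddNonnegMeasurable (fun _ : E => (1 : ℝ)) := .const zero_le_one
  have upper := Sop_iterate_le_exp_smul_Sop_zero_iterate (Q := Q) hf hB one p x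
  have lower := Sop_zero_iterate_le_exp_smul_Sop_iterate (Q := Q) hf hB one p x
  simp only [markov, Pi.smul_apply, smul_eq_mul, mul_one] at upper lower
  refine ⟨?_, upper⟩
  calc Real.exp (-(p * B))
        ≤ Real.exp (-(p * B)) * (Real.exp (p * B) * (Sop Q f α)^[p] (fun _ => 1) x) :=
          le_mul_of_one_le_right (Real.exp_nonneg _) lower
    _ = (Sop Q f α)^[p] (fun _ => 1) x := by rw [← mul_assoc, ← Real.exp_add]; simp

end WeightedOperator

section Harnack

variable {E : Type*} [MeasurableSpace E] {Q : Kernel E E} [IsMarkovKernel Q] {f : E → ℝ}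
  {α B : ℝ}

lemma Sop_iterate_one_le_mul (hf : Measurable f) (hB : ∀ x, |α * f x| ≤ B) {m : ℕ} {K : ℝ}
    (hME : ∀ x x' : E, ∀ s : Set E, MeasurableSet s →
      kIter Q m x s ≤ ENNReal.ofReal K * kIter Q m x' s)
    (q : ℕ) (y x : E) :
    (Sop Q f α)^[q] (fun _ => 1) y ≤
      K * Real.exp (2 * m * B) * (Sop Q f α)^[q] (fun _ => 1) x := by
  have hK : 1 ≤ K := by simpa using hME x x univ MeasurableSet.univ
  have hB0 : 0 ≤ B := (abs_nonneg _).trans (hB x)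
  rcases lt_or_ge q m with hqm | hqm
  · have hq : (q : ℝ) ≤ m := by exact_mod_cast hqm.le
    calc (Sop Q f α)^[q] (fun _ => 1) y ≤ Real.exp (q * B) :=
          (Sop_iterate_one_mem_Icc hf hB q y).2
      _ = Real.exp (2 * q * B) * Real.exp (-(q * B)) := by rw [← Real.exp_add]; ring_nf
      _ ≤ K * Real.exp (2 * m * B) * (Sop Q f α)^[q] (fun _ => 1) x := by
          gcongr
          · exact (Real.exp_le_exp.2 (by gcongr)).trans
              (le_mul_of_one_le_left (Real.exp_nonneg _) hK)
          · exact (Sop_iterate_one_mem_Icc hf hB q x).1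
  · obtain ⟨p, rfl⟩ := Nat.exists_eq_add_of_le hqm
    set h := (Sop Q f α)^[p] (fun _ => 1)
    have hh : IsBddNonnegMeasurable h :=
      (IsBddNonnegMeasurable.const zero_le_one).sop_iterate hf (fun x => le_of_abs_le (hB x)) p
    have upper := Sop_iterate_le_exp_smul_Sop_zero_iterate (Q := Q) hf hB hh m y
    have lower := Sop_zero_iterate_le_exp_smul_Sop_iterate (Q := Q) hf hB hh m x
    rw [Pi.smul_apply, smul_eq_mul, Sop_zero_iterate_eq_integral_kIter hh] at upper lower
    rw [Function.iterate_add_apply]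
    calc (Sop Q f α)^[m] h y ≤ Real.exp (m * B) * ∫ z, h z ∂kIter Q m y := upper
      _ ≤ Real.exp (m * B) * (K * ∫ z, h z ∂kIter Q m x) := by
          gcongr
          exact integral_le_mul_integral_of_le_smul (by linarith) (hME y x) hh.nonneg
            (hh.integrable _)
      _ ≤ Real.exp (m * B) * (K * (Real.exp (m * B) * (Sop Q f α)^[m] h x)) := by gcongr
      _ = K * Real.exp (2 * m * B) * (Sop Q f α)^[m] h x := by
          rw [show 2 * (m : ℝ) * B = m * B + m * B by ring, Real.exp_add]; ring

lemma abs_log_Sop_iterate_add_sub_le (hf : Measurable f) (hB : ∀ x, |α * f x| ≤ B) {M : ℝ}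
    (hM : ∀ q y x, (Sop Q f α)^[q] (fun _ => 1) y ≤ M * (Sop Q f α)^[q] (fun _ => 1) x)
    (p q : ℕ) (x : E) :
    |Real.log ((Sop Q f α)^[p + q] (fun _ => 1) x) -
      (Real.log ((Sop Q f α)^[p] (fun _ => 1) x) + Real.log ((Sop Q f α)^[q] (fun _ => 1) x))|
      ≤ Real.log M := by
  set v := fun n => (Sop Q f α)^[n] (fun _ => 1)
  have hv : ∀ n, IsBddNonnegMeasurable (v n) := fun n =>
    (IsBddNonnegMeasurable.const zero_le_one).sop_iterate hf (fun x => le_of_abs_le (hB x)) n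
  have hpos : ∀ n y, 0 < v n y := fun n y =>
    (Real.exp_pos _).trans_le (Sop_iterate_one_mem_Icc hf hB n y).1
  have hM0 : 0 < M := by simpa using (hpos 0 x).trans_le (hM 0 x x)
  have hconst : ∀ c : ℝ, (Sop Q f α)^[p] (fun _ => c) = c • v p := fun c => by
    rw [← Sop_iterate_smul]; congr; ext; simp
  have hsplit : v (p + q) = (Sop Q f α)^[p] (v q) := Function.iterate_add_apply _ _ _ _
  have upper : v (p + q) x ≤ M * (v p x * v q x) := by
    have := Sop_iterate_mono (Q := Q) hf (fun x => le_of_abs_le (hB x)) (hv q).nonneg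
      (fun y => hM q y x) (.const (mul_pos hM0 (hpos q x)).le) p x
    rw [hconst, Pi.smul_apply, smul_eq_mul, ← hsplit] at this
    linarith
  have lower : v p x * v q x ≤ M * v (p + q) x := by
    have := Sop_iterate_mono (Q := Q) (g₂ := M • v q) hf (fun x => le_of_abs_le (hB x))
      (fun _ => (hpos q x).le) (fun y => hM q x y) ((hv q).smul hM0.le) p x
    rw [hconst, Sop_iterate_smul, ← hsplit, Pi.smul_apply, Pi.smul_apply, smul_eq_mul,
      smul_eq_mul] at this
    linarith
  have hlog_mul : Real.log (v p x * v q x) = Real.log (v p x) + Real.log (v q x) :=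
    Real.log_mul (hpos p x).ne' (hpos q x).ne'
  rw [abs_sub_le_iff]
  constructor
  · have := Real.log_le_log (hpos _ x) upper
    rw [Real.log_mul hM0.ne' (mul_pos (hpos p x) (hpos q x)).ne', hlog_mul] at this
    linarith
  · have := Real.log_le_log (mul_pos (hpos p x) (hpos q x)) lower
    rw [Real.log_mul hM0.ne' (hpos _ x).ne', hlog_mul] at this
    linarith

end Harnack

section AlmostAdditive

variable {a : ℕ → ℝ} {L : ℝ}

lemma exists_tendsto_div_le_of_abs_sub_add_le (h : ∀ p q, |a (p + q) - (a p + a q)| ≤ L) :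
    ∃ ℓ, Tendsto (fun n => a n / n) atTop (𝓝 ℓ) ∧ ∀ n ≠ 0, ℓ ≤ a n / n + L / n := by
  have hsub : Subadditive (fun n => a n + L) := fun p q => by linarith [(abs_le.1 (h p q)).2]
  have hsuper : Subadditive (fun n => L - a n) := fun p q => by linarith [(abs_le.1 (h p q)).1]
  have hbdd : BddBelow (range fun n => (a n + L) / n) := by
    refine ⟨min (a 1 - L) 0, ?_⟩
    rintro _ ⟨n, rfl⟩
    rcases Nat.eq_zero_or_pos n with rfl | hn
    · simp
    -- `L - a` is subadditive as well, which gives `a n + L ≥ n * (a 1 - L)`.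
    · have hlin := hsuper.apply_mul_add_le n 1 0
      have h0 := abs_le.1 (h 0 0)
      simp only [mul_one, add_zero] at hlin h0
      refine (min_le_left _ _).trans ((le_div_iff₀ (by exact_mod_cast hn)).2 ?_)
      linarith
  refine ⟨hsub.lim, ?_, fun n hn => ?_⟩
  · simpa [add_div] using (hsub.tendsto_lim hbdd).sub (tendsto_const_div_atTop_nhds_zero_nat L)
  · simpa [add_div] using hsub.lim_le_div hbdd hn

theorem exists_tendsto_div_of_abs_sub_add_le (h : ∀ p q, |a (p + q) - (a p + a q)| ≤ L) :
    ∃ ℓ, Tendsto (fun n => a n / n) atTop (𝓝 ℓ) ∧ ∀ n ≠ 0, |a n / n - ℓ| ≤ L / n := by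
  obtain ⟨ℓ, hℓ, hle⟩ := exists_tendsto_div_le_of_abs_sub_add_le h
  obtain ⟨ℓ', hℓ', hle'⟩ := exists_tendsto_div_le_of_abs_sub_add_le (a := fun n => -a n)
    fun p q => by rw [← abs_neg]; convert h p q using 2; ring
  have hℓ'ℓ : ℓ' = -ℓ := tendsto_nhds_unique hℓ' (by simpa [neg_div] using hℓ.neg)
  refine ⟨ℓ, hℓ, fun n hn => abs_sub_le_iff.2 ⟨?_, ?_⟩⟩
  · have := hle' n hn
    rw [hℓ'ℓ, neg_div] at this
    linarith
  · linarith [hle n hn]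

end AlmostAdditive

section RiskSensitive

variable {E : Type*} [MeasurableSpace E] {f : E → ℝ} {α B : ℝ}

theorem tendsto_log_Sop_iterate_div_IRS {Q : Kernel E E} [IsMarkovKernel Q] (hf : Measurable f)
    (hB : ∀ x, |α * f x| ≤ B) {m : ℕ} {K : ℝ}
    (hME : ∀ x x' : E, ∀ s : Set E, MeasurableSet s →
      kIter Q m x s ≤ ENNReal.ofReal K * kIter Q m x' s)
    (x : E) :
    Tendsto (fun n : ℕ => Real.log ((Sop Q f α)^[n] (fun _ => 1) x) / n) atTop
        (𝓝 (IRS Q f α x)) ∧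
      ∀ n ≠ 0, |Real.log ((Sop Q f α)^[n] (fun _ => 1) x) / n - IRS Q f α x|
        ≤ Real.log (K * Real.exp (2 * m * B)) / n := by
  obtain ⟨ℓ, hℓ, hrate⟩ := exists_tendsto_div_of_abs_sub_add_le
    (a := fun n => Real.log ((Sop Q f α)^[n] (fun _ => 1) x))
    (abs_log_Sop_iterate_add_sub_le hf hB (Sop_iterate_one_le_mul hf hB hME) · · x)
  have hIRS : IRS Q f α x = ℓ := by
    simp only [IRS, one_div_mul_eq_div]
    exact hℓ.liminf_eq
  exact hIRS ▸ ⟨hℓ, hrate⟩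

theorem tendsto_Sop_iterate_one {Qk : ℕ → Kernel E E} {Q : Kernel E E}
    [∀ k, IsMarkovKernel (Qk k)] [IsMarkovKernel Q] {fk : ℕ → E → ℝ}
    (hfk : ∀ k, Measurable (fk k)) (hB : ∀ k x, |α * fk k x| ≤ B)
    (hf : ∀ x, Tendsto (fun k => fk k x) atTop (𝓝 (f x)))
    (htv : ∀ x, Tendsto (fun k => tvDist (Qk k x) (Q x)) atTop (𝓝 0)) (n : ℕ) (x : E) :
    Tendsto (fun k => (Sop (Qk k) (fk k) α)^[n] (fun _ => 1) x) atTop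
      (𝓝 ((Sop Q f α)^[n] (fun _ => 1) x)) := by
  induction n generalizing x with
  | zero => exact tendsto_const_nhds
  | succ n ih =>
    simp only [Function.iterate_succ_apply', Sop]
    refine ((Real.continuous_exp.tendsto _).comp ((hf x).const_mul α)).mul ?_
    exact tendsto_integral_of_tendsto_tvDist
      (fun k => ((IsBddNonnegMeasurable.const zero_le_one).sop_iterate (hfk k)
        (fun y => le_of_abs_le (hB k y)) n).measurable)
      (Real.exp_nonneg (n * B))
      (fun k y => ⟨(Real.exp_nonneg _).trans (Sop_iterate_one_mem_Icc (hfk k) (hB k) n y).1,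
        (Sop_iterate_one_mem_Icc (hfk k) (hB k) n y).2⟩)
      ih (htv x)

end RiskSensitive

lemma tendstoUniformly_of_abs_sub_le {ι α : Type*} {l : Filter ι} {F : ι → α → ℝ} {g : α → ℝ}
    {ε : ι → ℝ} (hε : Tendsto ε l (𝓝 0)) (h : ∀ᶠ i in l, ∀ a, |F i a - g a| ≤ ε i) :
    TendstoUniformly F g l :=
  Metric.tendstoUniformly_iff.2 fun δ hδ =>
    (h.and (hε.eventually (gt_mem_nhds hδ))).mono fun _ ⟨hi, hεi⟩ a => by
      rw [dist_comm, Real.dist_eq]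
      exact (hi a).trans_lt hεi

theorem stmt12_general {E U : Type*} [MeasurableSpace E] [MetricSpace U] [MeasurableSpace U]
    (P : Kernel (E × U) E) [IsMarkovKernel P]
    -- (ME)
    (m : ℕ) (K : ℝ)
    (hME : ∀ (u : E → U) (hu : Measurable u), ∀ x x' : E, ∀ B : Set E, MeasurableSet B →
      kIter (Qctrl P u hu) m x B ≤ ENNReal.ofReal K * kIter (Qctrl P u hu) m x' B)
    -- the cost function
    (c : E × U → ℝ) (hc : Measurable c) (C : ℝ) (hcb : ∀ p, |c p| ≤ C)
    (hccont : ∀ y : E, Continuous (fun a : U => c (y, a)))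
    (un : ℕ → E → U) (u : E → U)
    (hun : ∀ n, Measurable (un n)) (hu : Measurable u)
    (hconv : ∀ x, Tendsto (fun n => un n x) atTop (nhds (u x)))
    (htv : ∀ x, Tendsto
      (fun n => tvDist (Qctrl P (un n) (hun n) x) (Qctrl P u hu x)) atTop (nhds 0)) :
    ∀ α : ℝ, α ≠ 0 → ∀ x : E,
      Tendsto (fun n =>
          IRS (Qctrl P (un n) (hun n)) (fun y => c (y, un n y)) α x)
        atTop (nhds (IRS (Qctrl P u hu) (fun y => c (y, u y)) α x)) := by
  intro α _ x
  have hcost : ∀ (w : E → U) y, |α * c (y, w y)| ≤ |α| * C := fun w y => by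
    rw [abs_mul]; exact mul_le_mul_of_nonneg_left (hcb _) (abs_nonneg α)
  have hIRS (w : E → U) (hw : Measurable w) :=
    tendsto_log_Sop_iterate_div_IRS (hc.comp (measurable_id.prodMk hw)) (hcost w) (hME w hw) x
  refine TendstoUniformly.tendsto_of_eventually_tendsto (p := atTop)
    (F := fun n k => Real.log ((Sop (Qctrl P (un k) (hun k)) (fun y => c (y, un k y)) α)^[n]
      (fun _ => 1) x) / n)
    (tendstoUniformly_of_abs_sub_le (tendsto_const_div_atTop_nhds_zero_nat _)
      ((eventually_ne_atTop 0).mono fun n hn k => (hIRS (un k) (hun k)).2 n hn))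
    (Eventually.of_forall fun n => ?_) (hIRS u hu).1
  have hpos := (Real.exp_pos _).trans_le (Sop_iterate_one_mem_Icc (Q := Qctrl P u hu)
    (hc.comp (measurable_id.prodMk hu)) (hcost u) n x).1
  exact ((tendsto_Sop_iterate_one (fun k => hc.comp (measurable_id.prodMk (hun k)))
    (fun k => hcost (un k)) (fun y => ((hccont y).tendsto _).comp (hconv y)) htv n x).log
    hpos.ne').div_const _

/-- Theorem 3, second claim: under (UE), (ME) and total variation
convergence of the controlled kernels along `u_n → u`, the long run risk-sensitive
functionals converge: `I_x^α(u_n) → I_x^α(u)`. -/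
theorem stmt12 {E U : Type*} [TopologicalSpace E] [PolishSpace E]
    [MeasurableSpace E] [BorelSpace E]
    [MetricSpace U] [CompactSpace U] [MeasurableSpace U] [BorelSpace U]
    (P : Kernel (E × U) E) [IsMarkovKernel P]
    -- (UE)
    (Δ : ℝ) (hΔ : Δ < 1)
    (hUE : ∀ (x x' : E) (a a' : U) (B : Set E), MeasurableSet B →
      (P (x, a) B).toReal - (P (x', a') B).toReal ≤ Δ)
    -- (ME)
    (m : ℕ) (hm : 1 ≤ m) (K : ℝ)
    (hME : ∀ (u : E → U) (hu : Measurable u), ∀ x x' : E, ∀ B : Set E, MeasurableSet B →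
      kIter (Qctrl P u hu) m x B ≤ ENNReal.ofReal K * kIter (Qctrl P u hu) m x' B)
    -- the cost function
    (c : E × U → ℝ) (hc : Measurable c) (C : ℝ) (hcb : ∀ p, |c p| ≤ C)
    (hccont : ∀ y : E, Continuous (fun a : U => c (y, a)))
    (un : ℕ → E → U) (u : E → U)
    (hun : ∀ n, Measurable (un n)) (hu : Measurable u)
    (hconv : ∀ x, Tendsto (fun n => un n x) atTop (nhds (u x)))
    (htv : ∀ x, Tendsto
      (fun n => tvDist (Qctrl P (un n) (hun n) x) (Qctrl P u hu x)) atTop (nhds 0)) :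
    ∀ α : ℝ, α ≠ 0 → ∀ x : E,
      Tendsto (fun n =>
          IRS (Qctrl P (un n) (hun n)) (fun y => c (y, un n y)) α x)
        atTop (nhds (IRS (Qctrl P u hu) (fun y => c (y, u y)) α x)) :=
  stmt12_general P m K hME c hc C hcb hccont un u hun hu hconv htv
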